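/- If P and Q are incomparable prime implication filters of an MV-algebra, with q ∈ Q \ P and p ∈ P \ Q, then q → p ∈ ℓ(P) but q → p ∉ Q. -/

import Mathlib

/-- An MV-algebra `(α, ⊕, ¬, 0)` with the standard axioms. -/
class MV (α : Type*) extends Add α, Neg α, Zero α where
  add_assoc : ∀ a b c : α, a + (b + c) = (a + b) + c
  add_comm : ∀ a b : α, a + b = b + a
  add_zero : ∀ a : α, a + 0 = a
  neg_neg : ∀ a : α, - -a = a
  add_neg_zero : ∀ a : α, a + -(0 : α) = -(0 : α)
  luk : ∀ a b : α, -(-a + b) + b = -(-b + a) + a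

namespace MV

variable {α : Type*} [MV α]

/-- The top element `1 = ¬0`. -/
def one (α : Type*) [MV α] : α := -(0 : α)

/-- Implication `x → y = ¬x ⊕ y`. -/
def imp (a b : α) : α := -a + b

/-- Strong conjunction `x ⊗ y = ¬(¬x ⊕ ¬y)`. -/
def otimes (a b : α) : α := -(-a + -b)

/-- Join `x ∨ y = (x → y) → y`. -/
def sup (a b : α) : α := imp (imp a b) b

/-- Meet `x ∧ y = ¬(¬x ∨ ¬y)`. -/
def inf (a b : α) : α := -(sup (-a) (-b))

/-- Order: `x ≤ y` iff `x → y = 1`. -/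
def le (a b : α) : Prop := imp a b = one α

/-- Strict order. -/
def lt (a b : α) : Prop := le a b ∧ a ≠ b

/-- `n`-fold `⊗`-power. -/
def pow (a : α) : ℕ → α
  | 0 => one α
  | n + 1 => otimes a (pow a n)

/-- An implication filter: a lattice filter closed under `⊗`. -/
def IsImpFilter (F : Set α) : Prop :=
  one α ∈ F ∧ (∀ x ∈ F, ∀ y : α, le x y → y ∈ F) ∧
    (∀ x ∈ F, ∀ y ∈ F, inf x y ∈ F) ∧ (∀ x ∈ F, ∀ y ∈ F, otimes x y ∈ F)

/-- A prime implication filter: proper and `x ∨ y ∈ F → x ∈ F ∨ y ∈ F`. -/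
def IsPrime (F : Set α) : Prop :=
  IsImpFilter F ∧ F ≠ Set.univ ∧ ∀ x y : α, sup x y ∈ F → x ∈ F ∨ y ∈ F

/-- A minimal prime implication filter. -/
def IsMinimalPrime (F : Set α) : Prop :=
  IsPrime F ∧ ∀ G : Set α, IsPrime G → G ⊆ F → G = F

/-- A maximal proper implication filter. -/
def IsMaximal (F : Set α) : Prop :=
  IsImpFilter F ∧ F ≠ Set.univ ∧
    ∀ G : Set α, IsImpFilter G → G ≠ Set.univ → F ⊆ G → G = F

/-- A counit: `u < 1` joining to `1` with some `v < 1`. -/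
def IsCounit (u : α) : Prop :=
  lt u (one α) ∧ ∃ v : α, lt v (one α) ∧ sup u v = one α

/-- The implication filter generated by a set. -/
def gen (S : Set α) : Set α := ⋂₀ {F : Set α | IsImpFilter F ∧ S ⊆ F}

/-- The Conrad filter: the implication filter generated by all counits. -/
def conrad (α : Type*) [MV α] : Set α := gen {u : α | IsCounit u}

/-- The localizing filter `ℓ(P)`, generated by `{x → p : p ∈ P, x ∉ P}`. -/
def locFilter (P : Set α) : Set α :=
  gen {z : α | ∃ x : α, x ∉ P ∧ ∃ p ∈ P, z = imp x p}

end MV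

open MV

namespace MV

variable {α : Type*} [MV α]

theorem neg_add_self (a : α) : -a + a = one α := by
  have h := luk a (-(0 : α))
  rw [add_neg_zero, MV.neg_neg, MV.add_comm (0 : α) a, MV.add_zero] at h
  exact h.symm

theorem otimes_imp_le (a b : α) : le (otimes a (imp a b)) b := by
  show -(-(-a + -(-a + b))) + b = -(0 : α)
  rw [MV.neg_neg]
  calc -a + -(-a + b) + b = -a + (-(-a + b) + b) := (MV.add_assoc _ _ _).symm
    _ = -a + (-(-b + a) + a) := by rw [luk]
    _ = -(-b + a) + (-a + a) := by rw [MV.add_comm (-a), ← MV.add_assoc, MV.add_comm a (-a)]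
    _ = -(0 : α) := by rw [neg_add_self, one, add_neg_zero]

theorem IsImpFilter.mem_of_imp_mem {F : Set α} (hF : IsImpFilter F) {a b : α}
    (ha : a ∈ F) (hab : imp a b ∈ F) : b ∈ F :=
  hF.2.1 _ (hF.2.2.2 a ha _ hab) b (otimes_imp_le a b)

theorem subset_gen (S : Set α) : S ⊆ gen S :=
  fun _ hz _ hF => hF.2 hz

theorem imp_mem_locFilter {P : Set α} {x p : α} (hx : x ∉ P) (hp : p ∈ P) :
    imp x p ∈ locFilter P :=
  subset_gen _ ⟨x, hx, p, hp, rfl⟩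

end MV

theorem imp_mem_locFilter_not_mem_general {α : Type*} [MV α] (P Q : Set α)
    (hQ : IsPrime Q)
    (q p : α) (hq : q ∈ Q) (hqP : q ∉ P) (hp : p ∈ P) (hpQ : p ∉ Q) :
    imp q p ∈ locFilter P ∧ imp q p ∉ Q :=
  ⟨imp_mem_locFilter hqP hp, fun hqp => hpQ (hQ.1.mem_of_imp_mem hq hqp)⟩

/-- For incomparable primes `P, Q` with `q ∈ Q \ P` and `p ∈ P \ Q`,
`q → p` lies in `ℓ(P)` but not in `Q`. -/
theorem imp_mem_locFilter_not_mem {α : Type*} [MV α] (P Q : Set α)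
    (hP : IsPrime P) (hQ : IsPrime Q) (hPQ : ¬P ⊆ Q) (hQP : ¬Q ⊆ P)
    (q p : α) (hq : q ∈ Q) (hqP : q ∉ P) (hp : p ∈ P) (hpQ : p ∉ Q) :
    imp q p ∈ locFilter P ∧ imp q p ∉ Q :=
  imp_mem_locFilter_not_mem_general P Q hQ q p hq hqP hp hpQ
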